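/- For every d ≥ 2 there is ε = ε(d) ∈ (0,1), which may be taken as ε = 1/(8(d+3)²(6+31d)), such that for every d-regular graph E the graph G_E of the construction is ε-far from being Hamiltonian with respect to the degree bound d+3; that is, for every set F of unordered pairs of vertices of G_E with |F| ≤ ε·(d+3)·|V(G_E)|, the graph (V(G_E), E(G_E) △ F) is not Hamiltonian. -/

import Mathlib

open SimpleGraph

variable {V : Type*}

/-- The closed neighbourhood `N_G(S) = S ∪ {v : v adjacent to some w ∈ S}`. -/
def closedNbhd (G : SimpleGraph V) (S : Set V) : Set V :=
  S ∪ {v | ∃ w ∈ S, G.Adj v w}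

/-- `G` has maximum degree at most `d`. -/
def MaxDegLE (G : SimpleGraph V) (d : ℕ) : Prop :=
  ∀ v, (G.neighborSet v).ncard ≤ d

/-- `G` is `ε`-far from being Hamiltonian (w.r.t. the degree bound `d`):
modifying at most `ε·d·|V|` edges cannot make `G` Hamiltonian. -/
def FarFromHamiltonian [Fintype V] [DecidableEq V] (G : SimpleGraph V) (d : ℕ) (ε : ℝ) : Prop :=
  ∀ F : Finset (Sym2 V), (∀ e ∈ F, ¬ e.IsDiag) →
    (F.card : ℝ) ≤ ε * d * (Fintype.card V) →
    ¬ (SimpleGraph.fromEdgeSet (symmDiff G.edgeSet (↑F : Set (Sym2 V)))).IsHamiltonian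

/-- `G` is `δ`-locally Hamiltonian on the class `C`: for every `S` with `|S| ≤ δ·|V|`
there is a Hamiltonian `H ∈ C` (on the same vertex set, hence of the same order),
a set `T`, and an isomorphism `G[N_G(S)] ≅ H[N_H(T)]` mapping `S` onto `T`. -/
def LocallyHamiltonian [Fintype V] [DecidableEq V] (C : SimpleGraph V → Prop) (δ : ℝ)
    (G : SimpleGraph V) : Prop :=
  ∀ S : Set V, (S.ncard : ℝ) ≤ δ * (Fintype.card V) →
    ∃ H : SimpleGraph V, C H ∧ H.IsHamiltonian ∧ ∃ T : Set V,
      ∃ φ : (SimpleGraph.induce (closedNbhd G S) G) ≃g (SimpleGraph.induce (closedNbhd H T) H),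
        ∀ x : closedNbhd G S, (x : V) ∈ S ↔ ((φ x : V) ∈ T)

/-- `S` witnesses non-Hamiltonicity of `G` among graphs of maximum degree at most `d`:
no Hamiltonian graph `H` of the same order with degree bound `d` admits a set `T` and an
isomorphism `G[N_G(S)] ≅ H[N_H(T)]` mapping `S` onto `T`. -/
def WitnessesNonHamiltonicity [Fintype V] [DecidableEq V] (G : SimpleGraph V) (d : ℕ)
    (S : Set V) : Prop :=
  ∀ H : SimpleGraph V, H.IsHamiltonian → MaxDegLE H d → ∀ T : Set V,
    ¬ ∃ φ : (SimpleGraph.induce (closedNbhd G S) G) ≃g (SimpleGraph.induce (closedNbhd H T) H),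
        ∀ x : closedNbhd G S, (x : V) ∈ S ↔ ((φ x : V) ∈ T)

/-- `E` is `d`-regular. -/
def IsRegularDeg (E : SimpleGraph V) (d : ℕ) : Prop :=
  ∀ v, (E.neighborSet v).ncard = d

/-- The arcs of the directed graph `→E` obtained by replacing each edge by two arcs. -/
abbrev Arc (E : SimpleGraph V) : Type _ := {p : V × V // E.Adj p.1 p.2}

instance arcDecPred [Fintype V] (E : SimpleGraph V) [DecidableRel E.Adj] :
    DecidablePred (fun p : V × V => E.Adj p.1 p.2) := fun p => ‹DecidableRel E.Adj› p.1 p.2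

/-- The vertex set of `G_E`: 31 `a`-vertices per arc and 6 `b`-vertices per vertex. -/
abbrev GEVert (E : SimpleGraph V) : Type _ := (Arc E × Fin 31) ⊕ (V × Fin 6)

/-- For `1 ≤ j ≤ 31`, the vertex `a_j^e` of `G_E`. -/
def aV {E : SimpleGraph V} (e : Arc E) (j : ℕ) : GEVert E :=
  Sum.inl (e, ⟨(j - 1) % 31, by omega⟩)

/-- For `1 ≤ k ≤ 6`, the vertex `b_k^v` of `G_E`. -/
def bV (E : SimpleGraph V) (v : V) (k : ℕ) : GEVert E :=
  Sum.inr (v, ⟨(k - 1) % 6, by omega⟩)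

/-- Adjacency (with 1-based indices) inside the gadget `P(v_1,…,v_31)` (unsymmetrised):
`{v_i, v_{i+1}}` for `1 ≤ i ≤ 30`, `{v_j, v_{j+3}}` for `j ∈ {2,27}`, and
`{v_k, v_{k+5}}` for `k ∈ {6,12,15,21}`. -/
def gadgetRel (i j : ℕ) : Prop :=
  (1 ≤ i ∧ i ≤ 30 ∧ j = i + 1) ∨
  ((i = 2 ∧ j = 5) ∨ (i = 27 ∧ j = 30) ∨ (i = 6 ∧ j = 11) ∨ (i = 12 ∧ j = 17) ∨
    (i = 15 ∧ j = 20) ∨ (i = 21 ∧ j = 26))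

/-- The generating relation for the edges of `G_E`: the gadget edges, the cyclic edges given by
the linear order `f` on arcs, and the link edges (a link from the gadget of an arc `e = (u,v)`
to the gadget of an arc `e' = (v,w)` via `b_1^v,…,b_6^v`). -/
def GERel [Fintype V] (E : SimpleGraph V) [DecidableRel E.Adj]
    (f : Arc E ≃ Fin (Fintype.card (Arc E))) (x y : GEVert E) : Prop :=
  (∃ (e : Arc E) (i j : ℕ), gadgetRel i j ∧ x = aV e i ∧ y = aV e j) ∨
  (∃ e e' : Arc E, (f e').val = ((f e).val + 1) % (Fintype.card (Arc E)) ∧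
      x = aV e 31 ∧ y = aV e' 1) ∨
  (∃ e e' : Arc E, e.1.2 = e'.1.1 ∧
    ((x = aV e 23 ∧ y = aV e' 3) ∨ (x = aV e 18 ∧ y = aV e' 8) ∨
     (x = aV e 29 ∧ y = aV e' 9) ∨ (x = aV e 24 ∧ y = aV e' 14) ∨
     (x = aV e' 5 ∧ y = bV E e.1.2 1) ∨ (x = bV E e.1.2 1 ∧ y = bV E e.1.2 2) ∨
     (x = bV E e.1.2 2 ∧ y = bV E e.1.2 3) ∨ (x = bV E e.1.2 3 ∧ y = aV e 23) ∨
     (x = aV e 24 ∧ y = bV E e.1.2 4) ∨ (x = bV E e.1.2 4 ∧ y = bV E e.1.2 5) ∨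
     (x = bV E e.1.2 5 ∧ y = bV E e.1.2 6) ∨ (x = bV E e.1.2 6 ∧ y = aV e' 12)))

/-- The graph `G_E` of the construction. -/
def GE [Fintype V] (E : SimpleGraph V) [DecidableRel E.Adj]
    (f : Arc E ≃ Fin (Fintype.card (Arc E))) : SimpleGraph (GEVert E) :=
  SimpleGraph.fromRel (GERel E f)

/-- The list `L` of vertices is a subpath of the closed walk `C`, i.e. it appears (forwards or
reversed) as a sequence of consecutive vertices of `C` (cyclically). -/
def IsSubpath {W : Type*} (G : SimpleGraph W) {x : W} (C : G.Walk x x) (L : List W) : Prop :=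
  (∃ i : ℕ, ∀ (j : ℕ) (h : j < L.length), L.get ⟨j, h⟩ = C.getVert ((i + j) % C.length)) ∨
  (∃ i : ℕ, ∀ (j : ℕ) (h : j < L.reverse.length),
      L.reverse.get ⟨j, h⟩ = C.getVert ((i + j) % C.length))

/-- The expansion ratio of `E` is at least `1`: every nonempty `S` with `|S| ≤ |V|/2` has at
least `|S|` boundary edges. -/
def ExpansionGeOne [Fintype V] (E : SimpleGraph V) : Prop :=
  ∀ S : Set V, S.Nonempty → 2 * S.ncard ≤ Fintype.card V →
    S.ncard ≤ {p : Sym2 V | p ∈ E.edgeSet ∧ ∃ x ∈ S, ∃ y, y ∉ S ∧ p = s(x, y)}.ncard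

/-!
Let `H` be a Hamiltonian cycle of `G_E △ F`, viewed as a connected graph in which every vertex
has degree two, and call a vertex dirty if it lies in a pair of `F`; at clean vertices `H` uses
only edges of `G_E`. In a gadget without dirty vertices, the forced edges at the degree-two
vertices show that the cycle leaves the gadget at most once at `a₁₈`, that leaving at `a₁₈`
forces leaving at `a₈`, and that leaving at `a₁₂` forces leaving at `a₈` but not at `a₁₈`:
otherwise the hexagon `a₆ … a₁₁` would close up into a component of its own. As the external
edges at `a₈` and `a₁₈` are exactly the links `a₁₈ᵉ a₈ᵉ'`, double counting them shows that at
most twice as many clean gadgets as there are dirty ones are entered at `a₁₂` from `b₆`. Every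
clean `b₆ᵛ` enters the gadget of an arc leaving `v` there, so `|V| ≤ 3·#dirty ≤ 6|F|`, whereas
`|F| ≤ ε (d+3) |V(G_E)| = |V| / (8 (d+3))`.
-/

namespace SimpleGraph

variable {W : Type*} {H : SimpleGraph W}

lemma adj_iff_of_ncard_neighborSet_eq_two {x u v w : W} (hx : (H.neighborSet x).ncard = 2)
    (hu : H.Adj x u) (hv : H.Adj x v) (huv : u ≠ v) : H.Adj x w ↔ w = u ∨ w = v := by
  have hfin := Set.finite_of_ncard_ne_zero (hx.trans_ne two_ne_zero)
  have : {u, v} = H.neighborSet x :=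
    Set.eq_of_subset_of_ncard_le (Set.pair_subset hu hv) (by rw [hx, Set.ncard_pair huv]) hfin
  rw [← mem_neighborSet, ← this, Set.mem_insert_iff, Set.mem_singleton_iff]

lemma adj_and_adj_of_ncard_neighborSet_eq_two {x u v : W} (hx : (H.neighborSet x).ncard = 2)
    (huv : u ≠ v) (h : ∀ w, H.Adj x w → w = u ∨ w = v) : H.Adj x u ∧ H.Adj x v := by
  have : H.neighborSet x = {u, v} :=
    Set.eq_of_subset_of_ncard_le (fun w hw => h w hw) (by rw [hx, Set.ncard_pair huv])
  have hu : u ∈ H.neighborSet x := this ▸ Set.mem_insert u {v}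
  have hv : v ∈ H.neighborSet x := this ▸ Set.mem_insert_of_mem u rfl
  exact ⟨hu, hv⟩

lemma Connected.mem_of_forall_adj_mem (hH : H.Connected) {S : Set W} {s : W} (hs : s ∈ S)
    (hS : ∀ x ∈ S, ∀ y, H.Adj x y → y ∈ S) (t : W) : t ∈ S := by
  by_contra ht
  obtain ⟨p⟩ := hH.preconnected s t
  obtain ⟨d, -, hd, hd'⟩ := p.exists_boundary_dart S hs ht
  exact hd' (hS _ hd _ d.adj)

lemma Walk.IsHamiltonianCycle.connected_spanningCoe_toSubgraph [Fintype W] [DecidableEq W]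
    {G : SimpleGraph W} {a : W} {p : G.Walk a a} (hp : p.IsHamiltonianCycle) :
    p.toSubgraph.spanningCoe.Connected := by
  have hsub : ∀ e ∈ p.edges, e ∈ p.toSubgraph.spanningCoe.edgeSet := fun e he => by
    rwa [Subgraph.edgeSet_spanningCoe, Walk.mem_edges_toSubgraph]
  refine IsHamiltonian.connected fun _ => ⟨a, p.transfer _ hsub, ?_⟩
  exact isHamiltonianCycle_iff_isCycle_and_length_eq.2
    ⟨hp.isCycle.transfer hsub, by rw [length_transfer, hp.length_eq]⟩

lemma adj_of_adj_fromEdgeSet_symmDiff {G : SimpleGraph W} {F : Finset (Sym2 W)} {x y : W}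
    (hx : ∀ s ∈ F, x ∉ s) (h : (fromEdgeSet (symmDiff G.edgeSet (F : Set (Sym2 W)))).Adj x y) :
    G.Adj x y := by
  rcases Set.mem_symmDiff.1 ((fromEdgeSet_adj _).1 h).1 with ⟨h, -⟩ | ⟨h, -⟩
  · exact h
  · exact absurd (Sym2.mem_mk_left x y) (hx _ h)

end SimpleGraph

open SimpleGraph

lemma Finset.card_le_mul_card_compl_of_sum_eq {α : Type*} [Fintype α] [DecidableEq α]
    {a b : α → ℕ} {k : ℕ} {C S : Finset α} (hsum : ∑ x, a x = ∑ x, b x) (hk : ∀ x, a x ≤ k)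
    (hC : ∀ x ∈ C, a x ≤ b x) (hS : ∀ x ∈ S, a x < b x) (hSC : S ⊆ C) :
    S.card ≤ k * Cᶜ.card := by
  have hCS : ∑ x ∈ C, a x + S.card ≤ ∑ x ∈ C, b x := by
    rw [← Finset.sum_sdiff hSC (f := a), ← Finset.sum_sdiff hSC (f := b), add_assoc,
      Finset.card_eq_sum_ones, ← Finset.sum_add_distrib]
    exact add_le_add (Finset.sum_le_sum fun x hx => hC x (Finset.sdiff_subset hx))
      (Finset.sum_le_sum hS)
  have hCc : ∑ x ∈ Cᶜ, a x ≤ Cᶜ.card * k := by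
    simpa using Finset.sum_le_card_nsmul Cᶜ a k fun x _ => hk x
  have ha := Finset.sum_add_sum_compl C a
  have hb := Finset.sum_add_sum_compl C b
  rw [mul_comm]
  omega

lemma Finset.card_biUnion_sym2_toFinset_le {α : Type*} [DecidableEq α] (F : Finset (Sym2 α)) :
    (F.biUnion Sym2.toFinset).card ≤ 2 * F.card := by
  refine Finset.card_biUnion_le.trans ?_
  rw [mul_comm, ← smul_eq_mul]
  exact Finset.sum_le_card_nsmul _ _ _ fun s _ => by
    rw [Sym2.card_toFinset]; split_ifs <;> simp

lemma Nat.add_one_mod_ne_self {k m : ℕ} (hk : k < m) (hm : 2 ≤ m) : (k + 1) % m ≠ k := by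
  rcases Nat.lt_or_ge (k + 1) m with h | h
  · rw [Nat.mod_eq_of_lt h]; omega
  · rw [show k + 1 = m by omega, Nat.mod_self]; omega

def gadgetAdj (i j : ℕ) : Prop := gadgetRel i j ∨ gadgetRel j i

lemma gadgetRel_bounds {i j : ℕ} (h : gadgetRel i j) : i ∈ Set.Icc 1 31 ∧ j ∈ Set.Icc 1 31 := by
  simp only [gadgetRel] at h
  simp only [Set.mem_Icc]
  omega

/-- The indices `i` for which `a_i` has neighbours outside its own gadget in `G_E`. -/
def ports : Finset ℕ := {1, 3, 5, 8, 9, 12, 14, 18, 23, 24, 29, 31}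

section Gadget

variable {W : Type*} {G H : SimpleGraph W} {ι : ℕ → W}

structure IsGadget (H : SimpleGraph W) (ι : ℕ → W) : Prop where
  injOn : Set.InjOn ι (Set.Icc 1 31)
  gadgetAdj_of_adj : ∀ i ∈ Set.Icc 1 31, ∀ j ∈ Set.Icc 1 31, H.Adj (ι i) (ι j) → gadgetAdj i j
  mem_of_adj : ∀ i ∈ Set.Icc 1 31, i ∉ ports → ∀ w, H.Adj (ι i) w → w ∈ ι '' Set.Icc 1 31

def HasExternalEdgeAt (H : SimpleGraph W) (ι : ℕ → W) (i : ℕ) : Prop :=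
  ∃ w, H.Adj (ι i) w ∧ w ∉ ι '' Set.Icc 1 31

lemma IsGadget.mono (hG : IsGadget G ι)
    (hHG : ∀ i ∈ Set.Icc 1 31, ∀ w, H.Adj (ι i) w → G.Adj (ι i) w) : IsGadget H ι where
  injOn := hG.injOn
  gadgetAdj_of_adj i hi j hj h := hG.gadgetAdj_of_adj i hi j hj (hHG i hi _ h)
  mem_of_adj i hi hport w h := hG.mem_of_adj i hi hport w (hHG i hi w h)

namespace IsGadget

variable (hι : IsGadget H ι) (h2 : ∀ x, (H.neighborSet x).ncard = 2)
include hι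

lemma apply_ne {i j : ℕ} (hi : i ∈ Set.Icc 1 31) (hj : j ∈ Set.Icc 1 31) (hij : i ≠ j) :
    ι i ≠ ι j :=
  fun h => hij (hι.injOn hi hj h)

include h2

lemma adj_and_adj {i p q : ℕ} (hi : i ∈ Set.Icc 1 31)
    (hclosed : ∀ w, H.Adj (ι i) w → w ∈ ι '' Set.Icc 1 31) (hp : p ∈ Set.Icc 1 31)
    (hq : q ∈ Set.Icc 1 31) (hpq : p ≠ q)
    (hspec : ∀ j ∈ Set.Icc 1 31, gadgetAdj i j → H.Adj (ι i) (ι j) → j = p ∨ j = q) :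
    H.Adj (ι i) (ι p) ∧ H.Adj (ι i) (ι q) := by
  refine adj_and_adj_of_ncard_neighborSet_eq_two (h2 _) (hι.apply_ne hp hq hpq) fun w hw => ?_
  obtain ⟨j, hj, rfl⟩ := hclosed w hw
  rcases hspec j hj (hι.gadgetAdj_of_adj i hi j hj hw) hw with rfl | rfl <;> simp

lemma adj_and_adj_of_not_adj {i p q r : ℕ} (hi : i ∈ Set.Icc 1 31) (hport : i ∉ ports)
    (hp : p ∈ Set.Icc 1 31) (hq : q ∈ Set.Icc 1 31) (hpq : p ≠ q)
    (hnbr : ∀ j, gadgetAdj i j → j = p ∨ j = q ∨ j = r) (hr : ¬ H.Adj (ι i) (ι r)) :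
    H.Adj (ι i) (ι p) ∧ H.Adj (ι i) (ι q) :=
  hι.adj_and_adj h2 hi (hι.mem_of_adj i hi hport) hp hq hpq fun j _ hij hadj => by
    rcases hnbr j hij with rfl | rfl | rfl
    exacts [Or.inl rfl, Or.inr rfl, absurd hadj hr]

lemma adj_pred_and_adj_succ {i : ℕ} (hi : i ∈ ({7, 10, 13, 19} : Finset ℕ)) :
    H.Adj (ι i) (ι (i - 1)) ∧ H.Adj (ι i) (ι (i + 1)) := by
  simp only [Finset.mem_insert, Finset.mem_singleton] at hi
  have hi' : i ∈ Set.Icc 1 31 := by simp only [Set.mem_Icc]; omega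
  refine hι.adj_and_adj h2 hi'
    (hι.mem_of_adj i hi' (by rcases hi with rfl | rfl | rfl | rfl <;> decide))
    (by simp only [Set.mem_Icc]; omega) (by simp only [Set.mem_Icc]; omega) (by omega) ?_
  intro j _ hij _
  simp only [gadgetAdj, gadgetRel] at hij
  omega

lemma adj_eight (h8 : ¬ HasExternalEdgeAt H ι 8) : H.Adj (ι 8) (ι 7) ∧ H.Adj (ι 8) (ι 9) :=
  hι.adj_and_adj h2 (by simp) (fun w hw => not_not.1 fun hw' => h8 ⟨w, hw, hw'⟩) (by simp)
    (by simp) (by decide) fun j _ hj _ => by simp only [gadgetAdj, gadgetRel] at hj; omega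

lemma not_adj_six_eleven (hH : H.Connected) (hout : ∃ t, t ∉ ι '' Set.Icc 1 31)
    (h8 : ¬ HasExternalEdgeAt H ι 8) : ¬ H.Adj (ι 6) (ι 11) := by
  intro h611
  obtain ⟨h87, h89⟩ := hι.adj_eight h2 h8
  obtain ⟨h76, h78⟩ : H.Adj (ι 7) (ι 6) ∧ H.Adj (ι 7) (ι 8) :=
    hι.adj_pred_and_adj_succ h2 (by decide)
  obtain ⟨h109, h1011⟩ : H.Adj (ι 10) (ι 9) ∧ H.Adj (ι 10) (ι 11) :=
    hι.adj_pred_and_adj_succ h2 (by decide)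
  have hclosed : ∀ {j a b : ℕ}, a ∈ Set.Icc 6 11 → b ∈ Set.Icc 6 11 → a ≠ b →
      H.Adj (ι j) (ι a) → H.Adj (ι j) (ι b) → ∀ y, H.Adj (ι j) y → y ∈ ι '' Set.Icc 6 11 := by
    intro j a b ha hb hab hja hjb y hy
    have hab' : ι a ≠ ι b := hι.apply_ne (Set.Icc_subset_Icc (by norm_num) (by norm_num) ha)
      (Set.Icc_subset_Icc (by norm_num) (by norm_num) hb) hab
    rcases (adj_iff_of_ncard_neighborSet_eq_two (h2 _) hja hjb hab').1 hy with rfl | rfl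
    exacts [⟨a, ha, rfl⟩, ⟨b, hb, rfl⟩]
  obtain ⟨t, ht⟩ := hout
  have hsub : ι '' Set.Icc 6 11 ⊆ ι '' Set.Icc 1 31 :=
    Set.image_mono (Set.Icc_subset_Icc (by norm_num) (by norm_num))
  refine ht (hsub (hH.mem_of_forall_adj_mem (S := ι '' Set.Icc 6 11) ⟨6, by simp, rfl⟩ ?_ t))
  rintro _ ⟨j, ⟨hj6, hj11⟩, rfl⟩
  interval_cases j
  · exact hclosed (a := 7) (b := 11) (by simp) (by simp) (by decide) h76.symm h611
  · exact hclosed (a := 6) (b := 8) (by simp) (by simp) (by decide) h76 h78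
  · exact hclosed (a := 7) (b := 9) (by simp) (by simp) (by decide) h87 h89
  · exact hclosed (a := 8) (b := 10) (by simp) (by simp) (by decide) h89.symm h109.symm
  · exact hclosed (a := 9) (b := 11) (by simp) (by simp) (by decide) h109 h1011
  · exact hclosed (a := 10) (b := 6) (by simp) (by simp) (by decide) h1011.symm h611.symm

lemma not_hasExternalEdgeAt_eighteen (h1217 : ¬ H.Adj (ι 12) (ι 17)) :
    ¬ HasExternalEdgeAt H ι 18 := by
  have h1718 := (hι.adj_and_adj_of_not_adj h2 (i := 17) (p := 16) (q := 18) (r := 12) (by simp)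
    (by decide) (by simp) (by simp) (by decide)
    (fun j hj => by simp only [gadgetAdj, gadgetRel] at hj; omega) fun h => h1217 h.symm).2
  have h1918 := (hι.adj_pred_and_adj_succ h2 (i := 19) (by decide)).1
  rintro ⟨w, hw, hw'⟩
  rcases (adj_iff_of_ncard_neighborSet_eq_two (h2 _) h1718.symm h1918.symm
    (hι.apply_ne (by simp) (by simp) (by decide))).1 hw with rfl | rfl
  exacts [hw' ⟨17, by simp, rfl⟩, hw' ⟨19, by simp, rfl⟩]

lemma not_hasExternalEdgeAt_eighteen_of_eight (hH : H.Connected)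
    (hout : ∃ t, t ∉ ι '' Set.Icc 1 31) (h8 : ¬ HasExternalEdgeAt H ι 8) :
    ¬ HasExternalEdgeAt H ι 18 := by
  have h1112 := (hι.adj_and_adj_of_not_adj h2 (i := 11) (p := 10) (q := 12) (r := 6) (by simp)
    (by decide) (by simp) (by simp) (by decide)
    (fun j hj => by simp only [gadgetAdj, gadgetRel] at hj; omega)
    fun h => hι.not_adj_six_eleven h2 hH hout h8 h.symm).2
  have h1213 := (hι.adj_pred_and_adj_succ h2 (i := 13) (by decide)).1.symm
  refine hι.not_hasExternalEdgeAt_eighteen h2 fun h1217 => ?_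
  rcases (adj_iff_of_ncard_neighborSet_eq_two (h2 _) h1112.symm h1213
    (hι.apply_ne (by simp) (by simp) (by decide))).1 h1217 with h | h
  exacts [hι.apply_ne (by simp) (by simp) (by decide) h,
    hι.apply_ne (by simp) (by simp) (by decide) h]

lemma hasExternalEdgeAt_eight_of_eighteen (hH : H.Connected)
    (h18 : HasExternalEdgeAt H ι 18) : HasExternalEdgeAt H ι 8 := by
  by_contra h8
  obtain ⟨w, hw, hwo⟩ := h18
  exact hι.not_hasExternalEdgeAt_eighteen_of_eight h2 hH ⟨w, hwo⟩ h8 ⟨w, hw, hwo⟩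

lemma eq_of_adj_eighteen {w w' : W} (hw : H.Adj (ι 18) w) (hw' : H.Adj (ι 18) w')
    (hwo : w ∉ ι '' Set.Icc 1 31) (hwo' : w' ∉ ι '' Set.Icc 1 31) : w = w' := by
  have h1819 := (hι.adj_pred_and_adj_succ h2 (i := 19) (by decide)).1.symm
  rcases (adj_iff_of_ncard_neighborSet_eq_two (h2 _) hw h1819
    fun h => hwo ⟨19, by simp, h.symm⟩).1 hw' with rfl | rfl
  · rfl
  · exact absurd ⟨19, by simp, rfl⟩ hwo'

lemma hasExternalEdgeAt_twelve (hH : H.Connected) (h12 : HasExternalEdgeAt H ι 12) :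
    HasExternalEdgeAt H ι 8 ∧ ¬ HasExternalEdgeAt H ι 18 := by
  obtain ⟨w, hw, hwo⟩ := h12
  have h1213 := (hι.adj_pred_and_adj_succ h2 (i := 13) (by decide)).1.symm
  have hnot : ∀ j ∈ Set.Icc 1 31, j ≠ 13 → ¬ H.Adj (ι 12) (ι j) := fun j hj hj13 h => by
    rcases (adj_iff_of_ncard_neighborSet_eq_two (h2 _) hw h1213
      fun h => hwo ⟨13, by simp, h.symm⟩).1 h with h | h
    exacts [hwo ⟨j, hj, h⟩, hι.apply_ne hj (by simp) hj13 h]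
  refine ⟨?_, hι.not_hasExternalEdgeAt_eighteen h2 (hnot 17 (by simp) (by decide))⟩
  by_contra h8
  have h116 := (hι.adj_and_adj_of_not_adj h2 (i := 11) (p := 6) (q := 10) (r := 12) (by simp)
    (by decide) (by simp) (by simp) (by decide)
    (fun j hj => by simp only [gadgetAdj, gadgetRel] at hj; omega)
    fun h => hnot 11 (by simp) (by decide) h.symm).1
  exact hι.not_adj_six_eleven h2 hH ⟨w, hwo⟩ h8 h116.symm

end IsGadget

end Gadget

section Construction

variable {E : SimpleGraph V}

lemma aV_eq_aV_iff {e e' : Arc E} {i j : ℕ} :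
    aV e i = aV e' j ↔ e = e' ∧ (i - 1) % 31 = (j - 1) % 31 := by
  simp [aV, Fin.ext_iff]

@[simp] lemma aV_ne_bV {e : Arc E} {i : ℕ} {v : V} {k : ℕ} : aV e i ≠ bV E v k := by
  simp [aV, bV]

@[simp] lemma bV_ne_aV {e : Arc E} {i : ℕ} {v : V} {k : ℕ} : bV E v k ≠ aV e i :=
  aV_ne_bV.symm

lemma bV_eq_bV_iff {v v' : V} {k k' : ℕ} :
    bV E v k = bV E v' k' ↔ v = v' ∧ (k - 1) % 6 = (k' - 1) % 6 := by
  simp [bV, Fin.ext_iff]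

lemma Arc.snd_ne_fst (e : Arc E) : e.1.2 ≠ e.1.1 := fun h => E.irrefl (h ▸ e.2)

lemma aV_eight_not_mem_of_adj {H : SimpleGraph (GEVert E)} {g e : Arc E}
    (hg : IsGadget H (aV g)) (he : H.Adj (aV e 8) (aV g 18)) :
    aV e 8 ∉ aV g '' Set.Icc 1 31 := by
  rintro ⟨j, ⟨hj1, hj31⟩, hj⟩
  obtain ⟨rfl, hj8⟩ := aV_eq_aV_iff.1 hj
  obtain rfl : j = 8 := by omega
  have := hg.gadgetAdj_of_adj 18 (by simp) 8 (by simp) he.symm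
  simp [gadgetAdj, gadgetRel] at this

variable [Fintype V] [DecidableRel E.Adj]

lemma card_arc_eq {d : ℕ} (hreg : IsRegularDeg E d) :
    Fintype.card (Arc E) = Fintype.card V * d := by
  have hv : ∀ v, Fintype.card {w // E.Adj v w} = d := fun v => by
    rw [← hreg v, ← Nat.card_coe_set_eq, Nat.card_eq_fintype_card]
    rfl
  rw [Fintype.card_congr (Equiv.subtypeProdEquivSigmaSubtype fun v w => E.Adj v w),
    Fintype.card_sigma]
  simp [hv]

lemma card_GEVert_eq {d : ℕ} (hreg : IsRegularDeg E d) :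
    Fintype.card (GEVert E) = (31 * d + 6) * Fintype.card V := by
  simp only [GEVert, Fintype.card_sum, Fintype.card_prod, Fintype.card_fin, card_arc_eq hreg]
  ring

variable (f : Arc E ≃ Fin (Fintype.card (Arc E)))

lemma gadgetAdj_of_GE_adj (hm : 2 ≤ Fintype.card (Arc E)) {g : Arc E} {i j : ℕ}
    (hi : i ∈ Set.Icc 1 31) (hj : j ∈ Set.Icc 1 31) (h : (GE E f).Adj (aV g i) (aV g j)) :
    gadgetAdj i j := by
  have hcyc := (Nat.add_one_mod_ne_self (f g).isLt hm).symm
  simp [GE, GERel, aV_eq_aV_iff, -Subtype.exists, hcyc] at h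
  rcases h with ⟨-, (⟨a, b, hab, hia, hjb⟩ | ⟨e, e', hee, hl⟩) |
    (⟨a, b, hab, hja, hib⟩ | ⟨e, e', hee, hl⟩)⟩
  · have := gadgetRel_bounds hab
    simp only [Set.mem_Icc] at hi hj this
    obtain rfl : i = a := by omega
    obtain rfl : j = b := by omega
    exact Or.inl hab
  · rcases hl with ⟨⟨rfl, -⟩, rfl, -⟩ | ⟨⟨rfl, -⟩, rfl, -⟩ | ⟨⟨rfl, -⟩, rfl, -⟩ |
      ⟨⟨rfl, -⟩, rfl, -⟩ <;> exact absurd hee (Arc.snd_ne_fst _)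
  · have := gadgetRel_bounds hab
    simp only [Set.mem_Icc] at hi hj this
    obtain rfl : j = a := by omega
    obtain rfl : i = b := by omega
    exact Or.inr hab
  · rcases hl with ⟨⟨rfl, -⟩, rfl, -⟩ | ⟨⟨rfl, -⟩, rfl, -⟩ | ⟨⟨rfl, -⟩, rfl, -⟩ |
      ⟨⟨rfl, -⟩, rfl, -⟩ <;> exact absurd hee (Arc.snd_ne_fst _)

lemma GE_external_adj_aV {g : Arc E} {i : ℕ} (hi : i ∈ Set.Icc 1 31) {y : GEVert E}
    (h : (GE E f).Adj (aV g i) y) (hy : y ∉ aV g '' Set.Icc 1 31) :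
    i ∈ ports ∧ (i = 8 → ∃ e, y = aV e 18) := by
  simp only [Set.mem_Icc] at hi
  simp [GE, GERel, aV_eq_aV_iff, -Subtype.exists] at h
  rcases h with ⟨-, (⟨a, b, hab, -, rfl⟩ | ⟨e', -, hi', rfl⟩ | ⟨e, e', -, ⟨⟨-, hi'⟩, rfl⟩ |
      ⟨⟨-, hi'⟩, rfl⟩ | ⟨⟨-, hi'⟩, rfl⟩ | ⟨⟨-, hi'⟩, rfl⟩ | ⟨⟨-, hi'⟩, rfl⟩ | ⟨⟨-, hi'⟩, rfl⟩⟩) |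
    (⟨a, b, hab, rfl, -⟩ | ⟨e, -, rfl, hi'⟩ | ⟨e, e', -, ⟨rfl, -, hi'⟩ | ⟨rfl, -, hi'⟩ |
      ⟨rfl, -, hi'⟩ | ⟨rfl, -, hi'⟩ | ⟨rfl, -, hi'⟩ | ⟨rfl, -, hi'⟩⟩)⟩
  · exact absurd ⟨b, (gadgetRel_bounds hab).2, rfl⟩ hy
  -- In each remaining case `hi'` pins down the port `i`.
  all_goals first
    | exact absurd ⟨_, (gadgetRel_bounds ‹gadgetRel _ _›).1, rfl⟩ hy
    | refine ⟨?_, fun h8 => ?_⟩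
      · simp only [ports, Finset.mem_insert, Finset.mem_singleton]
        omega
      · subst h8
        first | exact ⟨_, rfl⟩ | omega

lemma GE_adj_bV_six {v : V} {y : GEVert E} (h : (GE E f).Adj (bV E v 6) y) :
    y = bV E v 5 ∨ ∃ e : Arc E, e.1.1 = v ∧ y = aV e 12 := by
  simp [GE, GERel, bV_eq_bV_iff] at h
  rcases h with ⟨-, ⟨-, -, x, hx, rfl⟩ | ⟨-, rfl, -⟩⟩
  · exact Or.inr ⟨⟨(v, x), hx⟩, rfl, rfl⟩
  · exact Or.inl rfl

lemma isGadget_GE (hm : 2 ≤ Fintype.card (Arc E)) (g : Arc E) : IsGadget (GE E f) (aV g) where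
  injOn i hi j hj h := by
    have := (aV_eq_aV_iff.1 h).2
    simp only [Set.mem_Icc] at hi hj
    omega
  gadgetAdj_of_adj i hi j hj h := gadgetAdj_of_GE_adj f hm hi hj h
  mem_of_adj i hi hport w h := not_not.1 fun hw => hport (GE_external_adj_aV f hi h hw).1

end Construction

section Counting

variable [Fintype V] {E : SimpleGraph V} [DecidableRel E.Adj]
  {f : Arc E ≃ Fin (Fintype.card (Arc E))} {H : SimpleGraph (GEVert E)} {D : Finset (GEVert E)}

def linksFromEight (H : SimpleGraph (GEVert E)) [DecidableRel H.Adj] (g : Arc E) :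
    Finset (Arc E) :=
  Finset.univ.filter fun e => H.Adj (aV g 8) (aV e 18)

def linksToEighteen (H : SimpleGraph (GEVert E)) [DecidableRel H.Adj] (g : Arc E) :
    Finset (Arc E) :=
  Finset.univ.filter fun e => H.Adj (aV e 8) (aV g 18)

lemma isGadget_of_clean (hD : ∀ x ∉ D, ∀ y, H.Adj x y → (GE E f).Adj x y)
    (hm : 2 ≤ Fintype.card (Arc E)) {g : Arc E} (hg : ∀ i, aV g i ∉ D) : IsGadget H (aV g) :=
  (isGadget_GE f hm g).mono fun i _ w hw => hD _ (hg i) w hw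

lemma exists_source_arc (hD : ∀ x ∉ D, ∀ y, H.Adj x y → (GE E f).Adj x y)
    (h2 : ∀ x, (H.neighborSet x).ncard = 2) {v : V} (hv : bV E v 6 ∉ D) :
    ∃ g : Arc E, g.1.1 = v ∧ H.Adj (bV E v 6) (aV g 12) := by
  obtain ⟨y, z, hyz, hN⟩ := Set.ncard_eq_two.1 (h2 (bV E v 6))
  have hy : H.Adj (bV E v 6) y := by
    rw [← mem_neighborSet, hN]; exact Set.mem_insert y {z}
  have hz : H.Adj (bV E v 6) z := by
    rw [← mem_neighborSet, hN]; exact Set.mem_insert_of_mem y rfl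
  rcases GE_adj_bV_six f (hD _ hv _ hy) with rfl | ⟨g, hg, rfl⟩
  · rcases GE_adj_bV_six f (hD _ hv _ hz) with rfl | ⟨g, hg, rfl⟩
    · exact absurd rfl hyz
    · exact ⟨g, hg, hz⟩
  · exact ⟨g, hg, hy⟩

variable [DecidableRel H.Adj]

lemma card_linksToEighteen_le_two (h2 : ∀ x, (H.neighborSet x).ncard = 2) (g : Arc E) :
    (linksToEighteen H g).card ≤ 2 := by
  rw [← Set.ncard_coe_finset, ← h2 (aV g 18)]
  refine Set.ncard_le_ncard_of_injOn (fun e => aV e 8) (fun e he => ?_) (fun e _ e' _ h => ?_)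
    (Set.finite_of_ncard_ne_zero ((h2 _).trans_ne two_ne_zero))
  · simp only [linksToEighteen, Finset.coe_filter, Finset.mem_univ, true_and,
      Set.mem_ofPred_eq] at he
    exact he.symm
  · exact (aV_eq_aV_iff.1 h).1

variable (hD : ∀ x ∉ D, ∀ y, H.Adj x y → (GE E f).Adj x y)
include hD

lemma card_linksFromEight_pos {g : Arc E} (hg : ∀ i, aV g i ∉ D)
    (h8 : HasExternalEdgeAt H (aV g) 8) : 0 < (linksFromEight H g).card := by
  obtain ⟨w, hw, hwo⟩ := h8
  obtain ⟨e, rfl⟩ := (GE_external_adj_aV f (by simp) (hD _ (hg 8) _ hw) hwo).2 rfl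
  exact Finset.card_pos.2 ⟨e, by simpa [linksFromEight] using hw⟩

variable (hm : 2 ≤ Fintype.card (Arc E)) (hH : H.Connected)
  (h2 : ∀ x, (H.neighborSet x).ncard = 2)
include hm hH h2

lemma card_linksToEighteen_le_card_linksFromEight {g : Arc E} (hg : ∀ i, aV g i ∉ D) :
    (linksToEighteen H g).card ≤ (linksFromEight H g).card := by
  have hι := isGadget_of_clean hD hm hg
  rcases Nat.eq_zero_or_pos (linksToEighteen H g).card with h0 | hpos
  · simp [h0]
  obtain ⟨e, he⟩ := Finset.card_pos.1 hpos
  have he := (Finset.mem_filter.1 he).2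
  have h18 : HasExternalEdgeAt H (aV g) 18 := ⟨_, he.symm, aV_eight_not_mem_of_adj hι he⟩
  have h8 := card_linksFromEight_pos hD hg (hι.hasExternalEdgeAt_eight_of_eighteen h2 hH h18)
  have hle : (linksToEighteen H g).card ≤ 1 := by
    refine Finset.card_le_one.2 fun e₁ he₁ e₂ he₂ => ?_
    simp only [linksToEighteen, Finset.mem_filter, Finset.mem_univ, true_and] at he₁ he₂
    exact (aV_eq_aV_iff.1 (hι.eq_of_adj_eighteen h2 he₁.symm he₂.symm
      (aV_eight_not_mem_of_adj hι he₁) (aV_eight_not_mem_of_adj hι he₂))).1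
  omega

lemma card_linksToEighteen_lt_card_linksFromEight {g : Arc E} (hg : ∀ i, aV g i ∉ D)
    (hsrc : H.Adj (bV E g.1.1 6) (aV g 12)) :
    (linksToEighteen H g).card < (linksFromEight H g).card := by
  have hι := isGadget_of_clean hD hm hg
  obtain ⟨h8, h18⟩ := hι.hasExternalEdgeAt_twelve h2 hH
    ⟨_, hsrc.symm, fun ⟨_, _, h⟩ => aV_ne_bV h⟩
  have h0 : (linksToEighteen H g).card = 0 :=
    Finset.card_eq_zero.2 (Finset.filter_eq_empty_iff.2 fun e _ he =>
      h18 ⟨_, he.symm, aV_eight_not_mem_of_adj hι he⟩)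
  exact h0 ▸ card_linksFromEight_pos hD hg h8

lemma card_le_three_mul_card_of_adj_GE : Fintype.card V ≤ 3 * D.card := by
  classical
  set C : Finset (Arc E) := Finset.univ.filter fun g => ∀ i, aV g i ∉ D
  set src : Arc E → Prop := fun g => H.Adj (bV E g.1.1 6) (aV g 12)
  have hCsrc : (C.filter src).card ≤ 2 * Cᶜ.card :=
    Finset.card_le_mul_card_compl_of_sum_eq
      (Finset.sum_card_bipartiteAbove_eq_sum_card_bipartiteBelow _).symm
      (card_linksToEighteen_le_two h2)
      (fun g hg => card_linksToEighteen_le_card_linksFromEight hD hm hH h2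
        (Finset.mem_filter.1 hg).2)
      (fun g hg => card_linksToEighteen_lt_card_linksFromEight hD hm hH h2
        (Finset.mem_filter.1 (Finset.mem_filter.1 hg).1).2 (Finset.mem_filter.1 hg).2)
      (Finset.filter_subset _ _)
  have hsrc : (Finset.univ.filter fun v => bV E v 6 ∉ D).card ≤
      (Finset.univ.filter src).card :=
    Finset.card_le_card_of_surjOn (fun g => g.1.1) fun v hv => by
      obtain ⟨g, rfl, hg⟩ := exists_source_arc hD h2 (Finset.mem_filter.1 hv).2
      exact ⟨g, Finset.mem_filter.2 ⟨Finset.mem_univ g, hg⟩, rfl⟩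
  have hsplit : (Finset.univ.filter src).card ≤ (C.filter src).card + Cᶜ.card := by
    refine (Finset.card_le_card fun g hg => ?_).trans (Finset.card_union_le _ _)
    by_cases hgC : g ∈ C
    · exact Finset.mem_union_left _ (Finset.mem_filter.2 ⟨hgC, (Finset.mem_filter.1 hg).2⟩)
    · exact Finset.mem_union_right _ (Finset.mem_compl.2 hgC)
  -- Projecting `D` to `Arc E ⊕ V` separates the dirty arcs from the dirty vertices `b₆ᵛ`.
  have hdirty : Cᶜ.card + (Finset.univ.filter fun v => bV E v 6 ∈ D).card ≤ D.card := by
    rw [← Finset.card_disjSum]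
    refine (Finset.card_le_card ?_).trans (Finset.card_image_le (f := Sum.map Prod.fst Prod.fst))
    rintro (g | v) h
    · obtain ⟨i, hi⟩ : ∃ i, aV g i ∈ D := by simpa [C] using h
      exact Finset.mem_image.2 ⟨aV g i, hi, rfl⟩
    · exact Finset.mem_image.2 ⟨bV E v 6, by simpa using h, rfl⟩
  have hV := Finset.card_filter_add_card_filter_not (s := Finset.univ) fun v => bV E v 6 ∉ D
  simp only [not_not, Finset.card_univ] at hV
  omega

end Counting

/-- For every `d ≥ 2`, with `ε = 1/(8(d+3)²(6+31d))`, for every `d`-regular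
base graph `E` the graph `G_E` is `ε`-far from being Hamiltonian w.r.t. the degree bound
`d + 3`. -/
theorem stmt11 {V : Type*} [Fintype V] [DecidableEq V] (E : SimpleGraph V)
    [DecidableRel E.Adj] (d : ℕ) (hd : 2 ≤ d) (hreg : IsRegularDeg E d)
    (f : Arc E ≃ Fin (Fintype.card (Arc E))) :
    FarFromHamiltonian (GE E f) (d + 3)
      (1 / (8 * ((d : ℝ) + 3) ^ 2 * (6 + 31 * (d : ℝ)))) := by
  classical
  intro F _ hF hHam
  have hGE := card_GEVert_eq hreg
  obtain ⟨a, p, hp⟩ := hHam fun h => by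
    have := Nat.eq_one_of_mul_eq_one_right (hGE ▸ h)
    omega
  have hV : 0 < Fintype.card V :=
    Fintype.card_pos_iff.2 (a.elim (fun x => ⟨x.1.1.1⟩) fun x => ⟨x.1⟩)
  have hVF : Fintype.card V ≤ 6 * F.card := by
    refine (card_le_three_mul_card_of_adj_GE (H := p.toSubgraph.spanningCoe)
      (D := F.biUnion Sym2.toFinset)
      (fun x hx y hxy => adj_of_adj_fromEdgeSet_symmDiff (by simpa using hx) hxy.adj_sub)
      (by rw [card_arc_eq hreg]; nlinarith) hp.connected_spanningCoe_toSubgraph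
      fun x => hp.isCycle.ncard_neighborSet_toSubgraph_eq_two (hp.mem_support x)).trans ?_
    linarith [F.card_biUnion_sym2_toFinset_le]
  have hε : 1 / (8 * ((d : ℝ) + 3) ^ 2 * (6 + 31 * (d : ℝ))) * ((d + 3 : ℕ) : ℝ) *
      (((31 * d + 6) * Fintype.card V : ℕ) : ℝ) = Fintype.card V / (8 * ((d : ℝ) + 3)) := by
    push_cast
    field_simp
    ring
  rw [hGE, hε, le_div_iff₀ (by positivity)] at hF
  have : F.card * (8 * (d + 3)) ≤ Fintype.card V := by exact_mod_cast hF
  nlinarith
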